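/- Let n ≥ 1 and let U ⊆ {0,…,2^n−1} be a nonempty set that is downward closed under binary domination (j ∈ U and i ⪯ j imply i ∈ U), and let breve(U) = {j ∈ U : there is no ℓ ∈ U with j ≺ ℓ} be its set of most dominant elements. Then for every X ⊆ {0,…,2^n−1}: U_p(X) = U if and only if |X| = |U| and there is a choice of sets Q_j ∈ ψ_j for each j ∈ breve(U) such that X = ⋃_{j ∈ breve(U)} Q_j. -/

import Mathlib

/-- Binary domination: every binary digit of `i` is at most the corresponding digit of `j`. -/
def bdom (i j : ℕ) : Prop := ∀ t, i.testBit t = true → j.testBit t = true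

instance (i j : ℕ) : Decidable (bdom i j) :=
  decidable_of_iff (i ||| j = j) (by
    constructor
    · intro h t hi
      have h1 : (i ||| j).testBit t = j.testBit t := by rw [h]
      rw [Nat.testBit_or, hi, Bool.true_or] at h1
      exact h1.symm
    · intro h
      apply Nat.eq_of_testBit_eq
      intro t
      rw [Nat.testBit_or]
      cases hi : i.testBit t with
      | true => simp [h t hi]
      | false => simp)

/-- One step of zero-LLR propagation, computing the stage-`t` zero-LLR set from the
stage-`t+1` zero-LLR set `S`, for a polar code of length `2^n`. -/
def zstep (n t : ℕ) (S : Finset ℕ) : Finset ℕ :=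
  (Finset.range (2 ^ n)).filter fun i =>
    if i.testBit t then i ∈ S ∧ i - 2 ^ t ∈ S else i ∈ S ∨ i + 2 ^ t ∈ S

/-- Zero-LLR set at stage `t` for puncturing set `X`, for a polar code of length `2^n`:
`Zstage n X n = X` and `Zstage n X t = zstep n t (Zstage n X (t+1))` for `t < n`. -/
def Zstage (n : ℕ) (X : Finset ℕ) (t : ℕ) : Finset ℕ :=
  if _h : n ≤ t then X else zstep n t (Zstage n X (t + 1))
termination_by n - t
decreasing_by omega

/-- The incapable set resulting from puncturing set `X`. -/
def Up (n : ℕ) (X : Finset ℕ) : Finset ℕ := Zstage n X 0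

/-- `psi n j Q`: `Q` is a minimal puncturing bit pattern making bit `j` incapable. -/
def psi (n j : ℕ) (Q : Finset ℕ) : Prop :=
  Q ⊆ Finset.range (2 ^ n) ∧ j ∈ Up n Q ∧ ∀ Q' ⊂ Q, j ∉ Up n Q'

/-! Bit `t` pairs each index `i` with `i ^^^ 2 ^ t`; on each pair a propagation step puts the
OR of the two memberships on the lower index and the AND on the upper one, so it preserves
cardinality, and `|U_p(X)| = |X|`. Induction over the stages shows that stage `t` is closed
under clearing bits of position `≥ t`, so `U_p(X)` is downward closed under `⪯`. Hence if every
most dominant `j` of `U` lies in `U_p(Q_j)`, then `U ⊆ U_p(⋃ Q_j)`, and comparing cardinalities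
forces `U_p(X) = U` and `X = ⋃ Q_j` at once. -/

theorem Nat.add_two_pow_eq_xor {i t : ℕ} (h : i.testBit t = false) : i + 2 ^ t = i ^^^ 2 ^ t := by
  obtain ⟨q, r, hr, rfl⟩ : ∃ q r, r < 2 ^ t ∧ i = 2 ^ t * q + r :=
    ⟨_, _, Nat.mod_lt _ (Nat.two_pow_pos t), (Nat.div_add_mod i _).symm⟩
  rw [Nat.testBit_two_pow_mul_add _ hr, if_neg (lt_irrefl t), Nat.sub_self, Nat.testBit_zero,
    decide_eq_false_iff_not] at h
  apply Nat.eq_of_testBit_eq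
  intro j
  rw [add_right_comm, ← mul_add_one, Nat.testBit_xor, Nat.testBit_two_pow_mul_add _ hr,
    Nat.testBit_two_pow_mul_add _ hr, Nat.testBit_two_pow]
  split_ifs with hj
  · simp [hj.ne']
  · obtain ⟨k, rfl⟩ : ∃ k, j = t + k := ⟨j - t, by omega⟩
    rw [Nat.add_sub_cancel_left]
    cases k with
    | zero => simp [Nat.testBit_zero, h]; omega
    | succ k => simp [Nat.testBit_succ, show (q + 1) / 2 = q / 2 by omega]

theorem Nat.sub_two_pow_eq_xor {i t : ℕ} (h : i.testBit t = true) : i - 2 ^ t = i ^^^ 2 ^ t := by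
  have h' : (i ^^^ 2 ^ t).testBit t = false := by simp [h]
  have := Nat.add_two_pow_eq_xor h'
  rw [Nat.xor_assoc, Nat.xor_self, Nat.xor_zero] at this
  omega

theorem Nat.xor_two_pow_lt {i t : ℕ} (h : i.testBit t = true) : i ^^^ 2 ^ t < i := by
  rw [← Nat.sub_two_pow_eq_xor h]
  exact Nat.sub_lt (Nat.lt_of_lt_of_le (Nat.two_pow_pos t) (Nat.ge_two_pow_of_testBit h))
    (Nat.two_pow_pos t)

theorem Nat.xor_two_pow_lt_two_pow {i t n : ℕ} (hi : i < 2 ^ n) (ht : t < n) :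
    i ^^^ 2 ^ t < 2 ^ n :=
  Nat.xor_lt_two_pow hi (Nat.pow_lt_pow_right (by norm_num) ht)

/-- On each orbit `{a, σ a}`, `[a ∈ S ∨ σ a ∈ S] + [a ∈ S ∧ σ a ∈ S] = [a ∈ S] + [σ a ∈ S]`;
the bijection moves a member of `S` whose partner is not in `S` to the `¬ p` side of its orbit. -/
theorem card_filter_ite_and_or_of_involutive {α : Type*} [DecidableEq α] {R S : Finset α}
    (σ : α → α) (hσ : Function.Involutive σ) (p : α → Prop) [DecidablePred p]
    (hp : ∀ a, p (σ a) ↔ ¬p a) (hR : ∀ a ∈ R, σ a ∈ R) (hS : S ⊆ R) :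
    (R.filter fun a => if p a then a ∈ S ∧ σ a ∈ S else a ∈ S ∨ σ a ∈ S).card = S.card := by
  have hSR : ∀ a ∈ S, a ∈ R := fun a ha => hS ha
  symm
  refine Finset.card_nbij' (fun a => if p a ∧ σ a ∉ S then σ a else a)
    (fun a => if ¬p a ∧ a ∉ S then σ a else a) ?_ ?_ ?_ ?_
  all_goals
    intro a ha
    simp only [Finset.coe_filter, Finset.mem_coe, Set.mem_ofPred_eq] at ha ⊢
    have := hp a
    have := hσ a
    by_cases hpa : p a <;> by_cases haS : a ∈ S <;> by_cases hσa : σ a ∈ S <;>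
      simp_all

theorem mem_zstep {n t i : ℕ} {S : Finset ℕ} :
    i ∈ zstep n t S ↔ i < 2 ^ n ∧
      if i.testBit t then i ∈ S ∧ i ^^^ 2 ^ t ∈ S else i ∈ S ∨ i ^^^ 2 ^ t ∈ S := by
  rw [zstep, Finset.mem_filter, Finset.mem_range]
  cases h : i.testBit t
  · simp [Nat.add_two_pow_eq_xor h]
  · simp [Nat.sub_two_pow_eq_xor h]

theorem card_zstep {n t : ℕ} {S : Finset ℕ} (ht : t < n) (hS : S ⊆ Finset.range (2 ^ n)) :
    (zstep n t S).card = S.card := by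
  convert card_filter_ite_and_or_of_involutive (R := Finset.range (2 ^ n)) (· ^^^ 2 ^ t)
    (fun i => by simp) (fun i => i.testBit t = true) (fun i => by simp)
    (fun i hi => Finset.mem_range.2 (Nat.xor_two_pow_lt_two_pow (Finset.mem_range.1 hi) ht)) hS
    using 2
  ext i
  simp [mem_zstep]

theorem zstep_mono {n t : ℕ} {S T : Finset ℕ} (h : S ⊆ T) : zstep n t S ⊆ zstep n t T :=
  Finset.monotone_filter_right _ fun i _ => by split_ifs <;> grind

theorem Zstage_of_le {n t : ℕ} (X : Finset ℕ) (h : n ≤ t) : Zstage n X t = X := by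
  rw [Zstage, dif_pos h]

theorem Zstage_of_lt {n t : ℕ} (X : Finset ℕ) (h : t < n) :
    Zstage n X t = zstep n t (Zstage n X (t + 1)) := by
  rw [Zstage, dif_neg (not_le.2 h)]

section Zstage

variable {n : ℕ}

theorem Zstage_subset_range {X : Finset ℕ} (hX : X ⊆ Finset.range (2 ^ n)) (t : ℕ) :
    Zstage n X t ⊆ Finset.range (2 ^ n) := by
  rcases le_or_gt n t with h | h
  · rwa [Zstage_of_le X h]
  · rw [Zstage_of_lt X h]
    exact Finset.filter_subset _ _

theorem card_Zstage {X : Finset ℕ} (hX : X ⊆ Finset.range (2 ^ n)) (t : ℕ) :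
    (Zstage n X t).card = X.card := by
  rcases le_or_gt n t with h | h
  · rw [Zstage_of_le X h]
  · rw [Zstage_of_lt X h, card_zstep h (Zstage_subset_range hX _), card_Zstage hX]
termination_by n - t

theorem Zstage_mono {X Y : Finset ℕ} (h : X ⊆ Y) (t : ℕ) : Zstage n X t ⊆ Zstage n Y t := by
  rcases le_or_gt n t with ht | ht
  · rwa [Zstage_of_le X ht, Zstage_of_le Y ht]
  · rw [Zstage_of_lt X ht, Zstage_of_lt Y ht]
    exact zstep_mono (Zstage_mono h _)
termination_by n - t

theorem xor_two_pow_mem_Zstage {X : Finset ℕ} (hX : X ⊆ Finset.range (2 ^ n)) {t s j : ℕ}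
    (hj : j ∈ Zstage n X t) (hts : t ≤ s) (hs : j.testBit s = true) :
    j ^^^ 2 ^ s ∈ Zstage n X t := by
  have hjn : j < 2 ^ n := Finset.mem_range.1 (Zstage_subset_range hX t hj)
  have hsn : s < n := by
    by_contra! hns
    rw [Nat.testBit_lt_two_pow (hjn.trans_le (Nat.pow_le_pow_right two_pos hns))] at hs
    exact Bool.false_ne_true hs
  have htn : t < n := hts.trans_lt hsn
  rw [Zstage_of_lt X htn, mem_zstep] at hj ⊢
  refine ⟨Nat.xor_two_pow_lt_two_pow hjn hsn, ?_⟩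
  replace hj := hj.2
  rcases hts.lt_or_eq with hts | rfl
  · have IH {k : ℕ} (hk : k ∈ Zstage n X (t + 1)) (hks : k.testBit s = true) :
        k ^^^ 2 ^ s ∈ Zstage n X (t + 1) :=
      xor_two_pow_mem_Zstage hX hk hts hks
    have hst : (j ^^^ 2 ^ t).testBit s = true := by simp [hs, hts.ne]
    rw [Nat.testBit_xor, Nat.testBit_two_pow_of_ne hts.ne', Bool.xor_false, Nat.xor_right_comm]
    split_ifs at hj ⊢
    · exact ⟨IH hj.1 hs, IH hj.2 hst⟩
    · exact hj.imp (IH · hs) (IH · hst)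
  · simp [hs] at hj ⊢
    exact Or.inr hj.1
termination_by n - t

end Zstage

theorem mem_of_bdom_of_xor_two_pow_mem {S : Set ℕ}
    (hS : ∀ j ∈ S, ∀ s, j.testBit s = true → j ^^^ 2 ^ s ∈ S) {i j : ℕ} (hij : bdom i j)
    (hj : j ∈ S) : i ∈ S := by
  induction j using Nat.strong_induction_on with
  | _ j IH =>
    by_cases hji : i = j
    · exact hji ▸ hj
    obtain ⟨s, hjs, his⟩ : ∃ s, j.testBit s = true ∧ i.testBit s = false := by
      by_contra! h
      exact hji (Nat.eq_of_testBit_eq fun s => by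
        cases hi : i.testBit s <;> cases hj : j.testBit s <;> simp_all [hij s])
    refine IH _ (Nat.xor_two_pow_lt hjs) (fun u hu => ?_) (hS j hj s hjs)
    have hus : s ≠ u := by rintro rfl; simp_all
    simp [hij u hu, hus]

section Up

variable {n : ℕ} {X : Finset ℕ}

theorem Up_mono {Y : Finset ℕ} (h : X ⊆ Y) : Up n X ⊆ Up n Y :=
  Zstage_mono h 0

theorem card_Up (hX : X ⊆ Finset.range (2 ^ n)) : (Up n X).card = X.card :=
  card_Zstage hX 0

theorem mem_Up_of_bdom (hX : X ⊆ Finset.range (2 ^ n)) {i j : ℕ} (hij : bdom i j)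
    (hj : j ∈ Up n X) : i ∈ Up n X :=
  mem_of_bdom_of_xor_two_pow_mem (S := Up n X)
    (fun _ hk s hs => xor_two_pow_mem_Zstage hX hk (Nat.zero_le s) hs) hij hj

theorem exists_psi_subset {j : ℕ} (hX : X ⊆ Finset.range (2 ^ n)) (hj : j ∈ Up n X) :
    ∃ Q ⊆ X, psi n j Q := by
  obtain ⟨Q, hQ, hmin⟩ := Finset.exists_minimal (s := X.powerset.filter (j ∈ Up n ·))
    ⟨X, Finset.mem_filter.2 ⟨Finset.mem_powerset_self X, hj⟩⟩
  rw [Finset.mem_filter, Finset.mem_powerset] at hQ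
  refine ⟨Q, hQ.1, hQ.1.trans hX, hQ.2, fun Q' hQ' hjQ' => hQ'.2 ?_⟩
  exact hmin (Finset.mem_filter.2 ⟨Finset.mem_powerset.2 (hQ'.1.trans hQ.1), hjQ'⟩) hQ'.1

theorem subset_Up_biUnion {U B : Finset ℕ} {Q : ℕ → Finset ℕ}
    (hQ : B.biUnion Q ⊆ Finset.range (2 ^ n)) (hB : ∀ u ∈ U, ∃ j ∈ B, bdom u j)
    (hj : ∀ j ∈ B, j ∈ Up n (Q j)) : U ⊆ Up n (B.biUnion Q) := by
  intro u hu
  obtain ⟨j, hjB, huj⟩ := hB u hu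
  exact mem_Up_of_bdom hQ huj (Up_mono (Finset.subset_biUnion_of_mem Q hjB) (hj j hjB))

end Up

theorem exists_maximal_bdom {U : Finset ℕ} {u : ℕ} (hu : u ∈ U) :
    ∃ j ∈ U.filter fun j => ∀ ℓ ∈ U, ¬(bdom j ℓ ∧ j ≠ ℓ), bdom u j := by
  obtain ⟨j, hj, hmax⟩ := (U.filter (bdom u)).exists_max_image id ⟨u, by simp [hu, bdom]⟩
  rw [Finset.mem_filter] at hj
  refine ⟨j, Finset.mem_filter.2 ⟨hj.1, fun ℓ hℓ ⟨hjℓ, hne⟩ => hne ?_⟩, hj.2⟩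
  exact le_antisymm (Nat.le_of_testBit hjℓ)
    (hmax ℓ (Finset.mem_filter.2 ⟨hℓ, fun t ht => hjℓ t (hj.2 t ht)⟩))

theorem widely_equivalent_patterns_general (n : ℕ) (U : Finset ℕ) (X : Finset ℕ) (hX : X ⊆ Finset.range (2 ^ n)) :
    Up n X = U ↔
      (X.card = U.card ∧
        ∃ Q : ℕ → Finset ℕ,
          (∀ j ∈ U.filter fun j => ∀ ℓ ∈ U, ¬(bdom j ℓ ∧ j ≠ ℓ), psi n j (Q j)) ∧
          X = (U.filter fun j => ∀ ℓ ∈ U, ¬(bdom j ℓ ∧ j ≠ ℓ)).biUnion Q) := by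
  constructor
  · rintro rfl
    set B := (Up n X).filter fun j => ∀ ℓ ∈ Up n X, ¬(bdom j ℓ ∧ j ≠ ℓ)
    choose! Q hQX hQ using fun j (hj : j ∈ B) => exists_psi_subset hX (Finset.mem_filter.1 hj).1
    have hYX : B.biUnion Q ⊆ X := Finset.biUnion_subset.2 hQX
    have hXY : Up n X ⊆ Up n (B.biUnion Q) :=
      subset_Up_biUnion (hYX.trans hX) (fun _ => exists_maximal_bdom) fun j hj => (hQ j hj).2.1
    refine ⟨(card_Up hX).symm, Q, hQ, (Finset.eq_of_subset_of_card_le hYX ?_).symm⟩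
    simpa only [card_Up hX, card_Up (hYX.trans hX)] using Finset.card_le_card hXY
  · rintro ⟨hcard, Q, hQ, rfl⟩
    refine (Finset.eq_of_subset_of_card_le
      (subset_Up_biUnion hX (fun _ => exists_maximal_bdom) fun j hj => (hQ j hj).2.1) ?_).symm
    rw [card_Up hX, hcard]

/-- for nonempty downward-closed `U`, `U_p(X) = U` iff `|X| = |U|` and `X`
is a union of minimal patterns, one for each most dominant element of `U`. -/
theorem widely_equivalent_patterns (n : ℕ) (hn : 1 ≤ n)
    (U : Finset ℕ) (hU : U ⊆ Finset.range (2 ^ n)) (hne : U.Nonempty)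
    (hdc : ∀ j ∈ U, ∀ i, bdom i j → i ∈ U)
    (X : Finset ℕ) (hX : X ⊆ Finset.range (2 ^ n)) :
    Up n X = U ↔
      (X.card = U.card ∧
        ∃ Q : ℕ → Finset ℕ,
          (∀ j ∈ U.filter fun j => ∀ ℓ ∈ U, ¬(bdom j ℓ ∧ j ≠ ℓ), psi n j (Q j)) ∧
          X = (U.filter fun j => ∀ ℓ ∈ U, ¬(bdom j ℓ ∧ j ≠ ℓ)).biUnion Q) :=
  widely_equivalent_patterns_general n U X hX
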